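/- Let n ≥ 1, m ∈ ℝ, r ≥ 0, and let p : ℤⁿ → ℂ be a symbol of order m. Then the conjunction [p(D) is GS-s for every s > r, and p(D) is not GS-s for any s with 0 ≤ s < r] holds if and only if the following two conditions hold: (i) for every ε > 0 there exists K_ε > 0 such that |p(ξ)| ≥ K_ε·|ξ|^(m−(r+ε)) for all ξ ∈ ℤⁿ \ {0} with p(ξ) ≠ 0; (ii) if r > 0, then for every ε > 0 there exists K'_ε > 0 such that 0 < |p(ξ)| ≤ K'_ε·|ξ|^(m−(r−ε)) for infinitely many ξ ∈ ℤⁿ \ {0}. (This characterizes ind_GS(p(D)) = r, where ind_GS(p(D)) is the infimum of all s ≥ 0 for which p(D) is GS-s.) -/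

import Mathlib

open scoped BigOperators

/-- `|ξ| = Σⱼ |ξⱼ|`. -/
noncomputable def l1norm {n : ℕ} (ξ : Fin n → ℤ) : ℝ := ∑ j, |(ξ j : ℝ)|

/-- `‖ξ‖² = Σⱼ ξⱼ²`. -/
noncomputable def l2normSq {n : ℕ} (ξ : Fin n → ℤ) : ℝ := ∑ j, ((ξ j : ℝ)) ^ 2

/-- `u ∈ H^k(𝕋ⁿ)` in terms of its Fourier coefficients. -/
def InSobolev {n : ℕ} (k : ℝ) (u : (Fin n → ℤ) → ℂ) : Prop :=
  Summable fun ξ : Fin n → ℤ => (1 + l2normSq ξ) ^ k * ‖u ξ‖ ^ 2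

/-- Polynomial growth of Fourier coefficients (a distribution on `𝕋ⁿ`). -/
def PolyGrowth {n : ℕ} (u : (Fin n → ℤ) → ℂ) : Prop :=
  ∃ C N : ℝ, 0 < C ∧ 0 < N ∧
    ∀ ξ, ‖u ξ‖ ≤ C * (1 + Real.sqrt (l2normSq ξ)) ^ N

/-- Rapidly decreasing Fourier coefficients (a smooth function on `𝕋ⁿ`). -/
def RapidDecay {n : ℕ} (v : (Fin n → ℤ) → ℂ) : Prop :=
  ∀ N : ℝ, 0 < N → ∃ C : ℝ, 0 < C ∧
    ∀ ξ, ‖v ξ‖ ≤ C * (1 + Real.sqrt (l2normSq ξ)) ^ (-N)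

/-- `p` is a symbol of order `m`. -/
def SymbolOrder {n : ℕ} (m : ℝ) (p : (Fin n → ℤ) → ℂ) : Prop :=
  ∃ C : ℝ, 0 < C ∧ ∀ ξ, ‖p ξ‖ ≤ C * (1 + l2normSq ξ) ^ (m / 2)

/-- `p(D)` is globally hypoelliptic with loss of `r` derivatives (GH-`r`). -/
def GHr {n : ℕ} (m r : ℝ) (p : (Fin n → ℤ) → ℂ) : Prop :=
  ∀ (k : ℝ) (u : (Fin n → ℤ) → ℂ), PolyGrowth u →
    InSobolev k (fun ξ => p ξ * u ξ) → InSobolev (k + m - r) u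

/-- `p(D)` is globally solvable with loss of `r` derivatives (GS-`r`). -/
def GSr {n : ℕ} (m r : ℝ) (p : (Fin n → ℤ) → ℂ) : Prop :=
  ∀ (k : ℝ) (f : (Fin n → ℤ) → ℂ), InSobolev k f → (∀ ξ, p ξ = 0 → f ξ = 0) →
    ∃ u : (Fin n → ℤ) → ℂ, InSobolev (k + m - r) u ∧ ∀ ξ, p ξ * u ξ = f ξ

/-- `p(D)` is globally hypoelliptic (GH). -/
def GloballyHypoelliptic {n : ℕ} (p : (Fin n → ℤ) → ℂ) : Prop :=
  ∀ u : (Fin n → ℤ) → ℂ, PolyGrowth u →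
    RapidDecay (fun ξ => p ξ * u ξ) → RapidDecay u

/-!
`p(D)` is GS-`s` exactly when `|p(ξ)| ≥ c ⟨ξ⟩^{m-s}` wherever `p(ξ) ≠ 0`, with
`⟨ξ⟩ = (1 + ‖ξ‖²)^{1/2}`: the bound makes `u = f / p` lose only `s` derivatives, and its failure
along a sparse sequence of frequencies produces an `f ∈ H⁰` with no solution in `H^{m-s}`.
Since `|ξ|` and `⟨ξ⟩` are comparable on `ℤⁿ ∖ {0}` and finitely many frequencies never matter,
condition (i) is GS at every loss `r + ε`, and condition (ii) is the failure of GS at every loss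
below `r`.
-/

lemma Set.Finite.exists_pos_le {ι : Type*} {s : Set ι} (hs : s.Finite) {f : ι → ℝ}
    (hf : ∀ x ∈ s, 0 < f x) : ∃ c > 0, ∀ x ∈ s, c ≤ f x := by
  rcases s.eq_empty_or_nonempty with rfl | hne
  · exact ⟨1, one_pos, by simp⟩
  · obtain ⟨x₀, hx₀, hmin⟩ := s.exists_min_image f hs hne
    exact ⟨f x₀, hf x₀ hx₀, hmin⟩

lemma exists_injective_forall_lt_pow {ι : Type*} {s : Set ι} {ρ : ι → ℝ}
    (hpos : ∀ x ∈ s, 0 < ρ x) (hsmall : ∀ c > 0, ∃ x ∈ s, ρ x < c) :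
    ∃ g : ℕ → ι, Function.Injective g ∧ (∀ j, g j ∈ s) ∧ ∀ j, ρ (g j) < (1 / 2) ^ j := by
  have hglb : IsGLB (ρ '' s) 0 := by
    refine ⟨Set.forall_mem_image.mpr fun x hx => (hpos x hx).le, fun b hb => ?_⟩
    by_contra! hb0
    obtain ⟨x, hx, hxb⟩ := hsmall b hb0
    exact (hb ⟨x, hx, rfl⟩).not_gt hxb
  have h0 : (0 : ℝ) ∉ ρ '' s := fun ⟨x, hx, hx0⟩ => (hpos x hx).ne' hx0
  obtain ⟨x₁, hx₁, -⟩ := hsmall 1 one_pos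
  obtain ⟨u, hanti, -, hlim, hmem⟩ :=
    hglb.exists_seq_strictAnti_tendsto_of_notMem h0 ⟨ρ x₁, x₁, hx₁, rfl⟩
  obtain ⟨φ, hφ, hφlt⟩ := Filter.extraction_forall_of_eventually
    (P := fun j k => u k < (1 / 2) ^ j) fun j => hlim.eventually (gt_mem_nhds (by positivity))
  choose g hgs hgu using hmem
  refine ⟨g ∘ φ, fun i j hij => (hanti.comp_strictMono hφ).injective ?_, fun j => hgs _,
    fun j => (hgu _).symm ▸ hφlt j⟩
  simpa [← hgu] using congrArg ρ hij

lemma rpow_le_pow_abs_mul_rpow {x y K : ℝ} (hx : 0 < x) (hy : 0 < y) (hxy : x ≤ K * y)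
    (hyx : y ≤ K * x) (a : ℝ) : x ^ a ≤ K ^ |a| * y ^ a := by
  have hK : 0 < K := pos_of_mul_pos_left (hx.trans_le hxy) hy.le
  rcases le_or_gt 0 a with ha | ha
  · calc x ^ a ≤ (K * y) ^ a := Real.rpow_le_rpow hx.le hxy ha
      _ = K ^ |a| * y ^ a := by rw [abs_of_nonneg ha, Real.mul_rpow hK.le hy.le]
  · have hyK : y / K ≤ x := by rwa [div_le_iff₀ hK, mul_comm]
    calc x ^ a ≤ (y / K) ^ a := Real.rpow_le_rpow_of_nonpos (by positivity) hyK ha.le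
      _ = K ^ |a| * y ^ a := by
        rw [abs_of_neg ha, Real.div_rpow hy.le hK.le, Real.rpow_neg hK.le]; ring

section Norms

variable {n : ℕ}

lemma l2normSq_nonneg (ξ : Fin n → ℤ) : 0 ≤ l2normSq ξ :=
  Finset.sum_nonneg fun _ _ => sq_nonneg _

lemma one_add_l2normSq_pos (ξ : Fin n → ℤ) : 0 < 1 + l2normSq ξ := by
  linarith [l2normSq_nonneg ξ]

lemma abs_le_l1norm (ξ : Fin n → ℤ) (j : Fin n) : |(ξ j : ℝ)| ≤ l1norm ξ :=
  Finset.single_le_sum (f := fun i => |(ξ i : ℝ)|) (fun _ _ => abs_nonneg _) (Finset.mem_univ j)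

lemma one_le_l1norm {ξ : Fin n → ℤ} (hξ : ξ ≠ 0) : 1 ≤ l1norm ξ := by
  obtain ⟨j, hj⟩ := Function.ne_iff.mp hξ
  have : (1 : ℝ) ≤ |(ξ j : ℝ)| := by exact_mod_cast Int.one_le_abs hj
  exact this.trans (abs_le_l1norm ξ j)

lemma l2normSq_le_l1norm_sq (ξ : Fin n → ℤ) : l2normSq ξ ≤ l1norm ξ ^ 2 := by
  simpa [l2normSq, l1norm, sq_abs] using
    Finset.sum_sq_le_sq_sum_of_nonneg (s := Finset.univ) (f := fun j => |(ξ j : ℝ)|)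
      fun _ _ => abs_nonneg _

lemma l1norm_sq_le (ξ : Fin n → ℤ) : l1norm ξ ^ 2 ≤ n * l2normSq ξ := by
  simpa [l2normSq, l1norm, sq_abs] using
    sq_sum_le_card_mul_sum_sq (s := Finset.univ) (f := fun j => |(ξ j : ℝ)|)

lemma finite_setOf_l1norm_le (M : ℝ) : {ξ : Fin n → ℤ | l1norm ξ ≤ M}.Finite := by
  refine (Set.Finite.pi fun _ => Set.finite_Icc (-⌈M⌉) ⌈M⌉).subset fun ξ hξ j _ => ?_
  have : ((|ξ j| : ℤ) : ℝ) ≤ ⌈M⌉ := by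
    push_cast
    exact (abs_le_l1norm ξ j).trans (hξ.trans (Int.le_ceil M))
  exact abs_le.mp (by exact_mod_cast this)

lemma one_add_l2normSq_rpow_half_sq (ξ : Fin n → ℤ) (a : ℝ) :
    ((1 + l2normSq ξ) ^ (a / 2)) ^ 2 = (1 + l2normSq ξ) ^ a := by
  rw [← Real.rpow_natCast, ← Real.rpow_mul (one_add_l2normSq_pos ξ).le]; norm_num

lemma exists_l1norm_rpow_comparable (a : ℝ) :
    ∃ C > 0, ∀ ξ : Fin n → ℤ, ξ ≠ 0 →
      l1norm ξ ^ a ≤ C * (1 + l2normSq ξ) ^ (a / 2) ∧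
        (1 + l2normSq ξ) ^ (a / 2) ≤ C * l1norm ξ ^ a := by
  refine ⟨((n : ℝ) + 2) ^ |a / 2|, by positivity, fun ξ hξ => ?_⟩
  have h1 := one_le_l1norm hξ
  have hsq : (l1norm ξ ^ 2) ^ (a / 2) = l1norm ξ ^ a := by
    rw [← Real.rpow_natCast, ← Real.rpow_mul (by linarith)]; ring_nf
  have hx : 0 < l1norm ξ ^ 2 := by positivity
  have hy := one_add_l2normSq_pos ξ
  have hxy : l1norm ξ ^ 2 ≤ ((n : ℝ) + 2) * (1 + l2normSq ξ) := by
    nlinarith [l1norm_sq_le ξ, l2normSq_nonneg ξ]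
  have hyx : 1 + l2normSq ξ ≤ ((n : ℝ) + 2) * l1norm ξ ^ 2 := by
    nlinarith [l2normSq_le_l1norm_sq ξ]
  rw [← hsq]
  exact ⟨rpow_le_pow_abs_mul_rpow hx hy hxy hyx _, rpow_le_pow_abs_mul_rpow hy hx hyx hxy _⟩

end Norms

section LowerBounds

variable {n : ℕ}

def BracketLowerBound (a : ℝ) (p : (Fin n → ℤ) → ℂ) : Prop :=
  ∃ c : ℝ, 0 < c ∧ ∀ ξ, p ξ ≠ 0 → c * (1 + l2normSq ξ) ^ (a / 2) ≤ ‖p ξ‖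

def L1LowerBound (a : ℝ) (p : (Fin n → ℤ) → ℂ) : Prop :=
  ∃ K : ℝ, 0 < K ∧ ∀ ξ : Fin n → ℤ, ξ ≠ 0 → p ξ ≠ 0 → K * l1norm ξ ^ a ≤ ‖p ξ‖

def lowValues (p : (Fin n → ℤ) → ℂ) (K a : ℝ) : Set (Fin n → ℤ) :=
  {ξ | ξ ≠ 0 ∧ 0 < ‖p ξ‖ ∧ ‖p ξ‖ ≤ K * l1norm ξ ^ a}

variable {a : ℝ} {p : (Fin n → ℤ) → ℂ}

lemma bracketLowerBound_of_forall_notMem {S : Set (Fin n → ℤ)} (hS : S.Finite) {c : ℝ}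
    (hc : 0 < c) (h : ∀ ξ ∉ S, p ξ ≠ 0 → c * (1 + l2normSq ξ) ^ (a / 2) ≤ ‖p ξ‖) :
    BracketLowerBound a p := by
  have hw : ∀ ξ : Fin n → ℤ, 0 < (1 + l2normSq ξ) ^ (a / 2) := fun ξ =>
    Real.rpow_pos_of_pos (one_add_l2normSq_pos ξ) _
  obtain ⟨c', hc', hS'⟩ := (hS.inter_of_left {ξ | p ξ ≠ 0}).exists_pos_le
    (f := fun ξ => ‖p ξ‖ / (1 + l2normSq ξ) ^ (a / 2))
    fun ξ hξ => div_pos (norm_pos_iff.mpr hξ.2) (hw ξ)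
  refine ⟨min c c', lt_min hc hc', fun ξ hpξ => ?_⟩
  by_cases hξ : ξ ∈ S
  · calc min c c' * (1 + l2normSq ξ) ^ (a / 2) ≤ c' * (1 + l2normSq ξ) ^ (a / 2) :=
          mul_le_mul_of_nonneg_right (min_le_right c c') (hw ξ).le
      _ ≤ ‖p ξ‖ := (le_div_iff₀ (hw ξ)).mp (hS' ξ ⟨hξ, hpξ⟩)
  · exact (mul_le_mul_of_nonneg_right (min_le_left _ _) (hw ξ).le).trans (h ξ hξ hpξ)

lemma bracketLowerBound_of_forall_notMem_l1 {S : Set (Fin n → ℤ)} (hS : S.Finite) {K : ℝ}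
    (hK : 0 < K) (h : ∀ ξ ∉ S, ξ ≠ 0 → p ξ ≠ 0 → K * l1norm ξ ^ a ≤ ‖p ξ‖) :
    BracketLowerBound a p := by
  obtain ⟨C, hC, hcomp⟩ := exists_l1norm_rpow_comparable (n := n) a
  refine bracketLowerBound_of_forall_notMem (hS.insert 0) (div_pos hK hC) fun ξ hξ hpξ => ?_
  have hξ0 : ξ ≠ 0 := fun h0 => hξ (.inl h0)
  calc K / C * (1 + l2normSq ξ) ^ (a / 2) ≤ K / C * (C * l1norm ξ ^ a) := by
        gcongr; exact (hcomp ξ hξ0).2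
    _ = K * l1norm ξ ^ a := by field_simp
    _ ≤ ‖p ξ‖ := h ξ (fun hS => hξ (.inr hS)) hξ0 hpξ

lemma bracketLowerBound_iff_l1LowerBound : BracketLowerBound a p ↔ L1LowerBound a p := by
  constructor
  · rintro ⟨c, hc, h⟩
    obtain ⟨C, hC, hcomp⟩ := exists_l1norm_rpow_comparable (n := n) a
    refine ⟨c / C, div_pos hc hC, fun ξ hξ hpξ => ?_⟩
    calc c / C * l1norm ξ ^ a ≤ c / C * (C * (1 + l2normSq ξ) ^ (a / 2)) := by
          gcongr; exact (hcomp ξ hξ).1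
      _ = c * (1 + l2normSq ξ) ^ (a / 2) := by field_simp
      _ ≤ ‖p ξ‖ := h ξ hpξ
  · rintro ⟨K, hK, h⟩
    exact bracketLowerBound_of_forall_notMem_l1 Set.finite_empty hK fun ξ _ => h ξ

lemma bracketLowerBound_of_finite_lowValues {K : ℝ} (hK : 0 < K)
    (hfin : (lowValues p K a).Finite) : BracketLowerBound a p :=
  bracketLowerBound_of_forall_notMem_l1 hfin hK fun _ hξ hξ0 hpξ =>
    le_of_not_ge fun hle => hξ ⟨hξ0, norm_pos_iff.mpr hpξ, hle⟩

lemma lowValues_mono {K b : ℝ} (hK : 0 ≤ K) (hab : a ≤ b) : lowValues p K a ⊆ lowValues p K b :=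
  fun ξ ⟨hξ0, hpos, hle⟩ => ⟨hξ0, hpos, hle.trans <| by gcongr; exact one_le_l1norm hξ0⟩

lemma L1LowerBound.finite_lowValues (h : L1LowerBound a p) {ε : ℝ} (hε : 0 < ε) (K' : ℝ) :
    (lowValues p K' (a - ε)).Finite := by
  obtain ⟨K, hK, hb⟩ := h
  refine (finite_setOf_l1norm_le ((K' / K) ^ ε⁻¹)).subset fun ξ ⟨hξ0, hpos, hle⟩ => ?_
  have hl := zero_lt_one.trans_le (one_le_l1norm hξ0)
  have hla : 0 < l1norm ξ ^ a := Real.rpow_pos_of_pos hl a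
  have hlε : 0 < l1norm ξ ^ ε := Real.rpow_pos_of_pos hl ε
  have hpow : l1norm ξ ^ ε ≤ K' / K := by
    rw [le_div_iff₀ hK]
    have := (hb ξ hξ0 (norm_pos_iff.mp hpos)).trans hle
    rw [Real.rpow_sub hl, mul_div_assoc', le_div_iff₀ hlε] at this
    nlinarith
  calc l1norm ξ = (l1norm ξ ^ ε) ^ ε⁻¹ := by
        rw [← Real.rpow_mul hl.le, mul_inv_cancel₀ hε.ne', Real.rpow_one]
    _ ≤ (K' / K) ^ ε⁻¹ := Real.rpow_le_rpow hlε.le hpow (inv_nonneg.mpr hε.le)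

end LowerBounds

section Solvability

variable {n : ℕ} {m s : ℝ} {p : (Fin n → ℤ) → ℂ}

/-- The solution is `u = f / p`; the junk value `f / 0 = 0` handles the zeros of `p`. -/
lemma gsr_of_bracketLowerBound (h : BracketLowerBound (m - s) p) : GSr m s p := by
  obtain ⟨c, hc, hb⟩ := h
  intro k f hf hfz
  refine ⟨fun ξ => f ξ / p ξ, ?_, fun ξ => ?_⟩
  · refine (hf.mul_left (c ^ 2)⁻¹).of_nonneg_of_le
      (fun ξ => by have := one_add_l2normSq_pos ξ; positivity) fun ξ => ?_
    have hw := one_add_l2normSq_pos ξ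
    dsimp only
    by_cases hpξ : p ξ = 0
    · rw [hpξ, div_zero, norm_zero, zero_pow two_ne_zero, mul_zero]; positivity
    have hsq : c ^ 2 * (1 + l2normSq ξ) ^ (m - s) ≤ ‖p ξ‖ ^ 2 := by
      rw [← one_add_l2normSq_rpow_half_sq, ← mul_pow]
      exact pow_le_pow_left₀ (by positivity) (hb ξ hpξ) 2
    have hp2 : 0 < ‖p ξ‖ ^ 2 := by have := norm_pos_iff.mpr hpξ; positivity
    calc (1 + l2normSq ξ) ^ (k + m - s) * ‖f ξ / p ξ‖ ^ 2
        = (1 + l2normSq ξ) ^ k * ‖f ξ‖ ^ 2 * ((1 + l2normSq ξ) ^ (m - s) / ‖p ξ‖ ^ 2) := by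
          rw [norm_div, div_pow, add_sub_assoc, Real.rpow_add hw]; ring
      _ ≤ (1 + l2normSq ξ) ^ k * ‖f ξ‖ ^ 2 * (c ^ 2)⁻¹ := by
          gcongr
          rw [div_le_iff₀ hp2, inv_mul_eq_div, le_div_iff₀ (by positivity), mul_comm]
          exact hsq
      _ = (c ^ 2)⁻¹ * ((1 + l2normSq ξ) ^ k * ‖f ξ‖ ^ 2) := mul_comm _ _
  · by_cases hpξ : p ξ = 0
    · simp [hpξ, hfz ξ hpξ]
    · exact mul_div_cancel₀ _ hpξ

/-- If `|p(ξ)| / ⟨ξ⟩^{m-s}` takes arbitrarily small positive values, pick `ξⱼ` with values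
`ρⱼ < 2⁻ʲ`: then `f = Σ ρⱼ e_{ξⱼ}` lies in `H⁰`, but any solution has `⟨ξⱼ⟩^{m-s} |u(ξⱼ)| = 1`. -/
lemma bracketLowerBound_of_gsr (h : GSr m s p) : BracketLowerBound (m - s) p := by
  by_contra hlb
  simp only [BracketLowerBound, not_exists, not_and, not_forall, not_le] at hlb
  set ρ : (Fin n → ℤ) → ℝ := fun ξ => ‖p ξ‖ / (1 + l2normSq ξ) ^ ((m - s) / 2)
  have hw : ∀ ξ : Fin n → ℤ, 0 < (1 + l2normSq ξ) ^ ((m - s) / 2) := fun ξ =>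
    Real.rpow_pos_of_pos (one_add_l2normSq_pos ξ) _
  obtain ⟨g, hg, hgp, hgρ⟩ := exists_injective_forall_lt_pow (s := {ξ | p ξ ≠ 0}) (ρ := ρ)
    (fun ξ hξ => div_pos (norm_pos_iff.mpr hξ) (hw ξ)) fun c hc => by
      obtain ⟨ξ, hpξ, hlt⟩ := hlb c hc
      exact ⟨ξ, hpξ, (div_lt_iff₀ (hw ξ)).mpr hlt⟩
  set f : (Fin n → ℤ) → ℂ := Function.extend g (fun j => (ρ (g j) : ℂ)) 0
  have hf_off : ∀ ξ ∉ Set.range g, f ξ = 0 := fun ξ hξ => by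
    simp [f, Function.extend_apply' _ _ _ hξ]
  have hfg : ∀ j, f (g j) = ρ (g j) := fun j => hg.extend_apply _ _ j
  have hf : InSobolev 0 f := by
    refine (hg.summable_iff fun ξ hξ => by simp [hf_off ξ hξ]).mp ?_
    refine (summable_geometric_of_lt_one (r := 1 / 4) (by norm_num) (by norm_num)).of_nonneg_of_le
      (fun j => mul_nonneg (Real.rpow_nonneg (one_add_l2normSq_pos _).le _) (sq_nonneg _))
      fun j => ?_
    have hρ0 : 0 ≤ ρ (g j) := (div_pos (norm_pos_iff.mpr (hgp j)) (hw (g j))).le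
    simp only [Function.comp, Real.rpow_zero, one_mul, hfg, Complex.norm_real, Real.norm_eq_abs,
      sq_abs]
    calc ρ (g j) ^ 2 ≤ ((1 / 2) ^ j) ^ 2 := pow_le_pow_left₀ hρ0 (hgρ j).le 2
      _ = (1 / 4) ^ j := by rw [← pow_mul, mul_comm, pow_mul]; norm_num
  have hfz : ∀ ξ, p ξ = 0 → f ξ = 0 := fun ξ hpξ => hf_off ξ fun ⟨j, hj⟩ => hgp j (hj ▸ hpξ)
  obtain ⟨u, hu, hpu⟩ := h 0 f hf hfz
  have hone : ∀ j, (1 + l2normSq (g j)) ^ (0 + m - s) * ‖u (g j)‖ ^ 2 = 1 := fun j => by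
    have hpg := norm_pos_iff.mpr (hgp j)
    have hu : ‖u (g j)‖ = ((1 + l2normSq (g j)) ^ ((m - s) / 2))⁻¹ := by
      have := congrArg norm (hpu (g j))
      rw [norm_mul, hfg, Complex.norm_real, Real.norm_of_nonneg (div_pos hpg (hw _)).le] at this
      field_simp at this ⊢
      nlinarith [hw (g j)]
    rw [hu, inv_pow, one_add_l2normSq_rpow_half_sq, zero_add]
    exact mul_inv_cancel₀ (Real.rpow_pos_of_pos (one_add_l2normSq_pos _) _).ne'
  have hsum : Summable fun j => (1 + l2normSq (g j)) ^ (0 + m - s) * ‖u (g j)‖ ^ 2 :=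
    hu.comp_injective hg
  simp only [hone, summable_const_iff] at hsum
  exact one_ne_zero hsum

lemma gsr_iff_bracketLowerBound : GSr m s p ↔ BracketLowerBound (m - s) p :=
  ⟨bracketLowerBound_of_gsr, gsr_of_bracketLowerBound⟩

end Solvability

theorem stmt_10_general {n : ℕ} (m r : ℝ)
    (p : (Fin n → ℤ) → ℂ) :
    ((∀ s : ℝ, r < s → GSr m s p) ∧ (∀ s : ℝ, 0 ≤ s → s < r → ¬ GSr m s p)) ↔
      ((∀ ε : ℝ, 0 < ε → ∃ K : ℝ, 0 < K ∧ ∀ ξ : Fin n → ℤ, ξ ≠ 0 → p ξ ≠ 0 →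
          K * l1norm ξ ^ (m - (r + ε)) ≤ ‖p ξ‖) ∧
        (0 < r → ∀ ε : ℝ, 0 < ε → ∃ K' : ℝ, 0 < K' ∧
          {ξ : Fin n → ℤ | ξ ≠ 0 ∧ 0 < ‖p ξ‖ ∧
            ‖p ξ‖ ≤ K' * l1norm ξ ^ (m - (r - ε))}.Infinite)) := by
  simp only [gsr_iff_bracketLowerBound, bracketLowerBound_iff_l1LowerBound]
  constructor
  · rintro ⟨hgs, hngs⟩
    refine ⟨fun ε hε => hgs (r + ε) (by linarith), fun hr ε hε => ⟨1, one_pos, fun hfin => ?_⟩⟩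
    -- otherwise `p(D)` would be GS at the loss `max 0 (r - ε) < r`
    refine hngs (max 0 (r - ε)) (le_max_left _ _) (max_lt hr (by linarith)) ?_
    refine bracketLowerBound_iff_l1LowerBound.mp (bracketLowerBound_of_finite_lowValues one_pos
      (hfin.subset (lowValues_mono zero_le_one ?_)))
    linarith [le_max_right 0 (r - ε)]
  · rintro ⟨hsmall, hlarge⟩
    refine ⟨fun s hs => ?_, fun s hs0 hsr hgs => ?_⟩
    · rw [show s = r + (s - r) by ring]
      exact hsmall (s - r) (by linarith)
    · obtain ⟨K', -, hinf⟩ := hlarge (hs0.trans_lt hsr) ((r - s) / 2) (by linarith)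
      refine hinf ((hgs.finite_lowValues (ε := (r - s) / 2) (by linarith) K').subset ?_)
      rw [show m - s - (r - s) / 2 = m - (r - (r - s) / 2) by ring]
      rfl

theorem stmt_10 {n : ℕ} (hn : 1 ≤ n) (m r : ℝ) (hr : 0 ≤ r)
    (p : (Fin n → ℤ) → ℂ) (hp : SymbolOrder m p) :
    ((∀ s : ℝ, r < s → GSr m s p) ∧ (∀ s : ℝ, 0 ≤ s → s < r → ¬ GSr m s p)) ↔
      ((∀ ε : ℝ, 0 < ε → ∃ K : ℝ, 0 < K ∧ ∀ ξ : Fin n → ℤ, ξ ≠ 0 → p ξ ≠ 0 →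
          K * l1norm ξ ^ (m - (r + ε)) ≤ ‖p ξ‖) ∧
        (0 < r → ∀ ε : ℝ, 0 < ε → ∃ K' : ℝ, 0 < K' ∧
          {ξ : Fin n → ℤ | ξ ≠ 0 ∧ 0 < ‖p ξ‖ ∧
            ‖p ξ‖ ≤ K' * l1norm ξ ^ (m - (r - ε))}.Infinite)) :=
  stmt_10_general m r p
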